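/- arXiv:1611.09408 — 7 statements merged into one kernel-verified Lean document; each statement's English description precedes it below -/
import Mathlib

section
/- Suppose misclassification is nondifferential given (V, X), i.e., for every Borel set A ⊆ ℝ, all j, k ∈ Fin K and every x₀ ∈ 𝒳: P({Y ∈ A} ∩ {V* = k} ∩ {V = j} ∩ {X = x₀}) · P({V = j} ∩ {X = x₀}) = P({Y ∈ A} ∩ {V = j} ∩ {X = x₀}) · P({V* = k} ∩ {V = j} ∩ {X = x₀}). Then for every k ∈ Fin K and x₀ ∈ 𝒳 with P({V* = k} ∩ {X = x₀}) > 0 and every Borel set A ⊆ ℝ: P(Y ∈ A | {V* = k} ∩ {X = x₀}) = Σ over those j ∈ Fin K with P({V = j} ∩ {X = x₀}) > 0 of P(V = j | {V* = k} ∩ {X = x₀}) · P(Y ∈ A | {V = j} ∩ {X = x₀}). That is, the conditional law of the response given the misclassified covariate and the correctly measured covariates is a finite mixture of the conditional laws given the true covariate, with mixture weights equal to the reclassification probabilities. -/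
open MeasureTheory

open scoped Classical in
/-- Nondifferential misclassification given `(V, X)` implies that the conditional law of the
response given the misclassified covariate `V*` and the correctly measured covariates `X`
is a finite mixture of the conditional laws given the true covariate `V`, with mixture
weights equal to the reclassification probabilities. -/
theorem mixture_representation_with_covariates
    {Ω 𝓧 : Type*} [MeasurableSpace Ω] [MeasurableSpace 𝓧] [Countable 𝓧]
    [MeasurableSingletonClass 𝓧]
    (μ : Measure Ω) [IsProbabilityMeasure μ] {K : ℕ}
    (V Vstar : Ω → Fin K) (X : Ω → 𝓧) (Y : Ω → ℝ)
    (hV : Measurable V) (hVstar : Measurable Vstar) (hX : Measurable X) (hY : Measurable Y)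
    (hnondiff : ∀ A : Set ℝ, MeasurableSet A → ∀ j k : Fin K, ∀ x₀ : 𝓧,
      (μ (Y ⁻¹' A ∩ {ω | Vstar ω = k} ∩ {ω | V ω = j} ∩ {ω | X ω = x₀})).toReal *
          (μ ({ω | V ω = j} ∩ {ω | X ω = x₀})).toReal =
        (μ (Y ⁻¹' A ∩ {ω | V ω = j} ∩ {ω | X ω = x₀})).toReal *
          (μ ({ω | Vstar ω = k} ∩ {ω | V ω = j} ∩ {ω | X ω = x₀})).toReal) :
    ∀ k : Fin K, ∀ x₀ : 𝓧,
      0 < (μ ({ω | Vstar ω = k} ∩ {ω | X ω = x₀})).toReal →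
      ∀ A : Set ℝ, MeasurableSet A →
        (μ (Y ⁻¹' A ∩ ({ω | Vstar ω = k} ∩ {ω | X ω = x₀}))).toReal /
            (μ ({ω | Vstar ω = k} ∩ {ω | X ω = x₀})).toReal =
        ∑ j ∈ Finset.univ.filter
            (fun j : Fin K => 0 < (μ ({ω | V ω = j} ∩ {ω | X ω = x₀})).toReal),
          ((μ ({ω | V ω = j} ∩ ({ω | Vstar ω = k} ∩ {ω | X ω = x₀}))).toReal /
              (μ ({ω | Vstar ω = k} ∩ {ω | X ω = x₀})).toReal) *
          ((μ (Y ⁻¹' A ∩ ({ω | V ω = j} ∩ {ω | X ω = x₀}))).toReal /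
              (μ ({ω | V ω = j} ∩ {ω | X ω = x₀})).toReal) := by
  intro k x₀ hpos A hA
  -- abbreviations
  set a : Fin K → ℝ := fun j =>
    (μ (Y ⁻¹' A ∩ {ω | Vstar ω = k} ∩ {ω | V ω = j} ∩ {ω | X ω = x₀})).toReal with ha
  set b : Fin K → ℝ := fun j => (μ ({ω | V ω = j} ∩ {ω | X ω = x₀})).toReal with hb
  set c : Fin K → ℝ := fun j => (μ (Y ⁻¹' A ∩ {ω | V ω = j} ∩ {ω | X ω = x₀})).toReal with hc
  set d : Fin K → ℝ := fun j =>
    (μ ({ω | Vstar ω = k} ∩ {ω | V ω = j} ∩ {ω | X ω = x₀})).toReal with hd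
  set t : ℝ := (μ ({ω | Vstar ω = k} ∩ {ω | X ω = x₀})).toReal with ht
  -- measurability facts
  have hmV : ∀ j : Fin K, MeasurableSet {ω | V ω = j} := fun j => hV (measurableSet_singleton j)
  have hmVs : MeasurableSet {ω | Vstar ω = k} := hVstar (measurableSet_singleton k)
  have hmX : MeasurableSet {ω | X ω = x₀} := hX (measurableSet_singleton x₀)
  have hmYA : MeasurableSet (Y ⁻¹' A) := hY hA
  -- Step 1: decompose the numerator over the values of V
  have hcover : Y ⁻¹' A ∩ ({ω | Vstar ω = k} ∩ {ω | X ω = x₀}) =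
      ⋃ j : Fin K, (Y ⁻¹' A ∩ {ω | Vstar ω = k} ∩ {ω | V ω = j} ∩ {ω | X ω = x₀}) := by
    ext ω
    simp only [Set.mem_inter_iff, Set.mem_iUnion, Set.mem_preimage, Set.mem_setOf_eq]
    constructor
    · rintro ⟨h1, h2, h3⟩; exact ⟨V ω, ⟨⟨h1, h2⟩, rfl⟩, h3⟩
    · rintro ⟨j, ⟨⟨h1, h2⟩, h3⟩, h4⟩; exact ⟨h1, h2, h4⟩
  have hdisj : Pairwise (Function.onFun Disjoint
      (fun j : Fin K => Y ⁻¹' A ∩ {ω | Vstar ω = k} ∩ {ω | V ω = j} ∩ {ω | X ω = x₀})) := by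
    intro i j hij
    refine Set.disjoint_left.mpr ?_
    rintro ω ⟨⟨⟨-, -⟩, h1⟩, -⟩ ⟨⟨⟨-, -⟩, h2⟩, -⟩
    exact hij (h1.symm.trans h2)
  have hmeas : ∀ j : Fin K, MeasurableSet
      (Y ⁻¹' A ∩ {ω | Vstar ω = k} ∩ {ω | V ω = j} ∩ {ω | X ω = x₀}) := fun j =>
    ((hmYA.inter hmVs).inter (hmV j)).inter hmX
  have hsum : (μ (Y ⁻¹' A ∩ ({ω | Vstar ω = k} ∩ {ω | X ω = x₀}))).toReal = ∑ j : Fin K, a j := by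
    rw [hcover, measure_iUnion hdisj hmeas, tsum_fintype, ENNReal.toReal_sum]
    intro j _
    exact measure_ne_top μ _
  -- Step 2: terms with b j = 0 have a j = 0
  have hzero : ∀ j : Fin K, ¬ 0 < b j → a j = 0 := by
    intro j hj
    have hb0 : b j = 0 := le_antisymm (not_lt.mp hj) ENNReal.toReal_nonneg
    have hμ0 : μ ({ω | V ω = j} ∩ {ω | X ω = x₀}) = 0 := by
      rcases ENNReal.toReal_eq_zero_iff _ |>.mp hb0 with h | h
      · exact h
      · exact absurd h (measure_ne_top μ _)
    have hsub : Y ⁻¹' A ∩ {ω | Vstar ω = k} ∩ {ω | V ω = j} ∩ {ω | X ω = x₀} ⊆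
        {ω | V ω = j} ∩ {ω | X ω = x₀} := by
      rintro ω ⟨⟨⟨-, -⟩, h1⟩, h2⟩; exact ⟨h1, h2⟩
    simp only [ha]
    rw [measure_mono_null hsub hμ0]
    simp
  -- Step 3: for positive b j, a j = c j * d j / b j
  have hpos' : ∀ j : Fin K, 0 < b j → a j = c j * d j / b j := by
    intro j hj
    have := hnondiff A hA j k x₀
    rw [eq_div_iff hj.ne']
    exact this
  -- key identity
  have key : (∑ j : Fin K, a j) =
      ∑ j ∈ Finset.univ.filter (fun j : Fin K => 0 < b j), c j * d j / b j := by
    rw [Finset.sum_filter]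
    apply Finset.sum_congr rfl
    intro j _
    by_cases hj : 0 < b j
    · rw [if_pos hj, hpos' j hj]
    · rw [if_neg hj, hzero j hj]
  -- set rearrangements in the RHS
  have hset1 : ∀ j : Fin K, {ω | V ω = j} ∩ ({ω | Vstar ω = k} ∩ {ω | X ω = x₀}) =
      {ω | Vstar ω = k} ∩ {ω | V ω = j} ∩ {ω | X ω = x₀} := by
    intro j; ext ω
    simp only [Set.mem_inter_iff, Set.mem_setOf_eq]
    tauto
  have hset2 : ∀ j : Fin K, Y ⁻¹' A ∩ ({ω | V ω = j} ∩ {ω | X ω = x₀}) =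
      Y ⁻¹' A ∩ {ω | V ω = j} ∩ {ω | X ω = x₀} := fun j => (Set.inter_assoc _ _ _).symm
  calc (μ (Y ⁻¹' A ∩ ({ω | Vstar ω = k} ∩ {ω | X ω = x₀}))).toReal / t
      = (∑ j : Fin K, a j) / t := by rw [hsum]
    _ = (∑ j ∈ Finset.univ.filter (fun j : Fin K => 0 < b j), c j * d j / b j) / t := by
        rw [key]
    _ = ∑ j ∈ Finset.univ.filter (fun j : Fin K => 0 < b j), (d j / t) * (c j / b j) := by
        rw [Finset.sum_div]
        apply Finset.sum_congr rfl
        intro j _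
        ring
    _ = _ := by
        apply Finset.sum_congr rfl
        intro j _
        rw [hset1 j, hset2 j]
end

section
/- Assume P(V = j) > 0 for every j ∈ Fin K, assume misclassification is nondifferential, and assume Y is integrable. Then for every k ∈ Fin K with P(V* = k) > 0, the conditional mean of the response given the misclassified covariate is the corresponding mixture of conditional means given the true covariate: E[Y · 1_{V* = k}] / P(V* = k) = Σ_{j ∈ Fin K} q_{kj} · ( E[Y · 1_{V = j}] / P(V = j) ). -/
/-!
Nondifferential misclassification says that, within each stratum `{V = j}`, the event
`{V* = k}` is independent of `Y`. Hence the law of `Y` on `{V* = k, V = j}` is the law of `Y`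
on `{V = j}` scaled by `P(V* = k | V = j)`, and integrating the identity gives
`E[Y; V* = k, V = j] = P(V* = k, V = j) · E[Y | V = j]`. Summing over the partition of
`{V* = k}` by the value of `V` and dividing by `P(V* = k)` yields the mixture.
-/

open MeasureTheory

namespace MeasureTheory

variable {Ω : Type*} [MeasurableSpace Ω] {μ : Measure Ω} {S T : Set Ω}

lemma smul_map_restrict_eq_of_measure_preimage_inter {α : Type*} [MeasurableSpace α]
    [IsFiniteMeasure μ] {Y : Ω → α} (hY : Measurable Y)
    (h : ∀ A : Set α, MeasurableSet A →
      (μ (Y ⁻¹' A ∩ S)).toReal * (μ T).toReal = (μ (Y ⁻¹' A ∩ T)).toReal * (μ S).toReal) :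
    μ T • (μ.restrict S).map Y = μ S • (μ.restrict T).map Y := by
  ext A hA
  simp only [Measure.smul_apply, Measure.map_apply hY hA, Measure.restrict_apply (hY hA),
    smul_eq_mul]
  rw [← ENNReal.toReal_eq_toReal_iff' (by finiteness) (by finiteness), ENNReal.toReal_mul,
    ENNReal.toReal_mul, mul_comm, h A hA, mul_comm]

lemma toReal_measure_mul_setIntegral_eq [IsFiniteMeasure μ] {Y : Ω → ℝ} (hY : Measurable Y)
    (h : ∀ A : Set ℝ, MeasurableSet A →
      (μ (Y ⁻¹' A ∩ S)).toReal * (μ T).toReal = (μ (Y ⁻¹' A ∩ T)).toReal * (μ S).toReal) :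
    (μ T).toReal * ∫ ω in S, Y ω ∂μ = (μ S).toReal * ∫ ω in T, Y ω ∂μ := by
  have hmap : ∀ U : Set Ω, ∫ ω in U, Y ω ∂μ = ∫ y, y ∂(μ.restrict U).map Y := fun U =>
    (integral_map hY.aemeasurable aestronglyMeasurable_id).symm
  rw [hmap S, hmap T, ← smul_eq_mul, ← integral_smul_measure,
    smul_map_restrict_eq_of_measure_preimage_inter hY h, integral_smul_measure, smul_eq_mul]

/-- When `μ T = 0`, `S` is null and both sides vanish, the right one because `x / 0 = 0`. -/
lemma setIntegral_eq_div_mul_setIntegral_of_subset [IsFiniteMeasure μ] {Y : Ω → ℝ}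
    (hY : Measurable Y) (hST : S ⊆ T)
    (h : ∀ A : Set ℝ, MeasurableSet A →
      (μ (Y ⁻¹' A ∩ S)).toReal * (μ T).toReal = (μ (Y ⁻¹' A ∩ T)).toReal * (μ S).toReal) :
    ∫ ω in S, Y ω ∂μ = (μ S).toReal / (μ T).toReal * ∫ ω in T, Y ω ∂μ := by
  by_cases hT : μ T = 0
  · simp [setIntegral_measure_zero Y (measure_mono_null hST hT), hT]
  have hT' : (μ T).toReal ≠ 0 := ENNReal.toReal_ne_zero.2 ⟨hT, measure_ne_top μ T⟩
  rw [div_mul_eq_mul_div, eq_div_iff hT', mul_comm,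
    toReal_measure_mul_setIntegral_eq hY h]

lemma setIntegral_eq_sum_setIntegral_fiber_inter {ι : Type*} [Fintype ι] [MeasurableSpace ι]
    [MeasurableSingletonClass ι] {V : Ω → ι} (hV : Measurable V) (hS : MeasurableSet S)
    {Y : Ω → ℝ} (hY : IntegrableOn Y S μ) :
    ∫ ω in S, Y ω ∂μ = ∑ i, ∫ ω in {ω | V ω = i} ∩ S, Y ω ∂μ := by
  have hcover : S = ⋃ i, {ω | V ω = i} ∩ S := by ext; simp
  conv_lhs => rw [hcover]
  refine integral_iUnion_fintype (fun i => (hV (measurableSet_singleton i)).inter hS) ?_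
    (fun i => hY.mono_set Set.inter_subset_right)
  exact (pairwise_disjoint_fiber V).mono fun i j hij =>
    hij.mono Set.inter_subset_left Set.inter_subset_left

end MeasureTheory

theorem mixture_of_conditional_means_general
    {Ω : Type*} [MeasurableSpace Ω]
    (μ : Measure Ω) [IsProbabilityMeasure μ] {K : ℕ}
    (V Vstar : Ω → Fin K) (Y : Ω → ℝ)
    (hV : Measurable V) (hVstar : Measurable Vstar) (hY : Measurable Y)
    (hYint : Integrable Y μ)
    (hnondiff : ∀ A : Set ℝ, MeasurableSet A → ∀ j k : Fin K,
      (μ (Y ⁻¹' A ∩ {ω | Vstar ω = k} ∩ {ω | V ω = j})).toReal *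
          (μ {ω | V ω = j}).toReal =
        (μ (Y ⁻¹' A ∩ {ω | V ω = j})).toReal *
          (μ ({ω | Vstar ω = k} ∩ {ω | V ω = j})).toReal) :
    ∀ k : Fin K, 0 < (μ {ω | Vstar ω = k}).toReal →
      (∫ ω in {ω | Vstar ω = k}, Y ω ∂μ) / (μ {ω | Vstar ω = k}).toReal =
        ∑ j : Fin K,
          ((μ ({ω | V ω = j} ∩ {ω | Vstar ω = k})).toReal /
              (μ {ω | Vstar ω = k}).toReal) *
            ((∫ ω in {ω | V ω = j}, Y ω ∂μ) / (μ {ω | V ω = j}).toReal) := by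
  intro k _
  rw [setIntegral_eq_sum_setIntegral_fiber_inter (S := {ω | Vstar ω = k}) hV
    (hVstar (measurableSet_singleton k)) hYint.integrableOn, Finset.sum_div]
  refine Finset.sum_congr rfl fun j _ => ?_
  have hstratum : ∀ A : Set ℝ, MeasurableSet A →
      (μ (Y ⁻¹' A ∩ ({ω | V ω = j} ∩ {ω | Vstar ω = k}))).toReal * (μ {ω | V ω = j}).toReal =
        (μ (Y ⁻¹' A ∩ {ω | V ω = j})).toReal *
          (μ ({ω | V ω = j} ∩ {ω | Vstar ω = k})).toReal := fun A hA => by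
    rw [Set.inter_comm {ω | V ω = j}, ← Set.inter_assoc]
    exact hnondiff A hA j k
  rw [setIntegral_eq_div_mul_setIntegral_of_subset hY Set.inter_subset_left hstratum]
  ring

/-- Under nondifferential misclassification, the conditional mean of the response given the
misclassified covariate is the mixture (with reclassification-probability weights) of the
conditional means given the true covariate. -/
theorem mixture_of_conditional_means
    {Ω : Type*} [MeasurableSpace Ω]
    (μ : Measure Ω) [IsProbabilityMeasure μ] {K : ℕ}
    (V Vstar : Ω → Fin K) (Y : Ω → ℝ)
    (hV : Measurable V) (hVstar : Measurable Vstar) (hY : Measurable Y)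
    (hYint : Integrable Y μ)
    (hpos : ∀ j : Fin K, 0 < (μ {ω | V ω = j}).toReal)
    (hnondiff : ∀ A : Set ℝ, MeasurableSet A → ∀ j k : Fin K,
      (μ (Y ⁻¹' A ∩ {ω | Vstar ω = k} ∩ {ω | V ω = j})).toReal *
          (μ {ω | V ω = j}).toReal =
        (μ (Y ⁻¹' A ∩ {ω | V ω = j})).toReal *
          (μ ({ω | Vstar ω = k} ∩ {ω | V ω = j})).toReal) :
    ∀ k : Fin K, 0 < (μ {ω | Vstar ω = k}).toReal →
      (∫ ω in {ω | Vstar ω = k}, Y ω ∂μ) / (μ {ω | Vstar ω = k}).toReal =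
        ∑ j : Fin K,
          ((μ ({ω | V ω = j} ∩ {ω | Vstar ω = k})).toReal /
              (μ {ω | Vstar ω = k}).toReal) *
            ((∫ ω in {ω | V ω = j}, Y ω ∂μ) / (μ {ω | V ω = j}).toReal) :=
  mixture_of_conditional_means_general μ V Vstar Y hV hVstar hY hYint hnondiff
end

section
/- Let K = 2 (so V, V* ∈ {0,1}), assume P(V = j) > 0 and P(V* = k) > 0 for j, k ∈ {0,1}, assume misclassification is nondifferential, Y is integrable, and the true regression means are E[Y · 1_{V = j}]/P(V = j) = α₀ + α₁ j for j ∈ {0,1}. Then the naive mean contrast based on the misclassified covariate satisfies (E[Y·1_{V*=1}]/P(V*=1)) − (E[Y·1_{V*=0}]/P(V*=0)) = α₁ (q₁₁ − q₀₁). Consequently, if 0 < q₁₁ − q₀₁ < 1 and α₁ ≠ 0, the naive contrast has the same sign as α₁ and strictly smaller absolute value than |α₁| (attenuation bias of the naive analysis). -/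
/-! Nondifferentiality says that, inside `{V = j}`, the law of `Y` on `{V* = k}` is a multiple of
its law on `{V = j}`, so `E[Y; V* = k, V = j] = P(V* = k, V = j) (α₀ + α₁ j)`. Summing over `j`
and dividing by `P(V* = k)` gives `E[Y | V* = k] = α₀ + α₁ q_{k1}`, hence the contrast
`α₁ (q₁₁ - q₀₁)`; a factor in `(0, 1)` keeps the sign of `α₁` and shrinks its size. -/

open MeasureTheory Function

section LawProportional

variable {Ω : Type*} [MeasurableSpace Ω] {μ : Measure Ω} {Y : Ω → ℝ} {S T : Set Ω}

def LawProportional (μ : Measure Ω) (Y : Ω → ℝ) (S T : Set Ω) : Prop :=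
  ∀ A : Set ℝ, MeasurableSet A →
    (μ (Y ⁻¹' A ∩ S)).toReal * (μ T).toReal = (μ (Y ⁻¹' A ∩ T)).toReal * (μ S).toReal

variable [IsFiniteMeasure μ]

lemma LawProportional.map_restrict_smul_eq (hY : AEMeasurable Y μ)
    (hS : MeasurableSet S) (hT : MeasurableSet T)
    (h : LawProportional μ Y S T) :
    μ T • (μ.restrict S).map Y = μ S • (μ.restrict T).map Y := by
  ext A hA
  rw [Measure.smul_apply, Measure.smul_apply, Measure.map_apply_of_aemeasurable hY.restrict hA,
    Measure.map_apply_of_aemeasurable hY.restrict hA, Measure.restrict_apply' hS,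
    Measure.restrict_apply' hT, smul_eq_mul, smul_eq_mul,
    ← ENNReal.toReal_eq_toReal_iff' (by finiteness) (by finiteness), ENNReal.toReal_mul,
    ENNReal.toReal_mul, mul_comm, h A hA, mul_comm]

lemma LawProportional.toReal_mul_setIntegral_eq (hY : AEMeasurable Y μ)
    (hS : MeasurableSet S) (hT : MeasurableSet T)
    (h : LawProportional μ Y S T) :
    (μ T).toReal * ∫ ω in S, Y ω ∂μ = (μ S).toReal * ∫ ω in T, Y ω ∂μ := by
  have hlaw := congrArg (fun ν => ∫ y, y ∂ν) (h.map_restrict_smul_eq hY hS hT)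
  simpa only [integral_smul_measure, smul_eq_mul,
    integral_map (f := fun y : ℝ => y) hY.restrict aestronglyMeasurable_id] using hlaw

lemma LawProportional.setIntegral_eq_mul_div (hY : AEMeasurable Y μ)
    (hS : MeasurableSet S) (hT : MeasurableSet T) (hST : S ⊆ T)
    (h : LawProportional μ Y S T) :
    ∫ ω in S, Y ω ∂μ = (μ S).toReal * ((∫ ω in T, Y ω ∂μ) / (μ T).toReal) := by
  by_cases hT0 : μ T = 0
  · have hS0 : μ S = 0 := measure_mono_null hST hT0
    simp [setIntegral_measure_zero _ hS0, hS0]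
  · have hT0' : (μ T).toReal ≠ 0 := ENNReal.toReal_ne_zero.2 ⟨hT0, measure_ne_top μ T⟩
    rw [mul_div_assoc', eq_div_iff hT0', mul_comm,
      h.toReal_mul_setIntegral_eq hY hS hT]

end LawProportional

section Partition

lemma iUnion_inter_fiber_eq {Ω ι : Type*} (V : Ω → ι) (S : Set Ω) :
    ⋃ j, S ∩ {ω | V ω = j} = S := by
  ext ω; simp

lemma pairwise_disjoint_inter_fiber {Ω ι : Type*} (V : Ω → ι) (S : Set Ω) :
    Pairwise (Disjoint on fun j => S ∩ {ω | V ω = j}) :=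
  fun _ _ hij => Set.disjoint_left.2 fun _ h₁ h₂ => hij (h₁.2.symm.trans h₂.2)

variable {Ω ι : Type*} [MeasurableSpace Ω] [Fintype ι] {μ : Measure Ω} {V : Ω → ι} {S : Set Ω}

lemma measure_toReal_eq_sum_inter_fiber [IsFiniteMeasure μ]
    (hV : ∀ j, MeasurableSet {ω | V ω = j}) (hS : MeasurableSet S) :
    (μ S).toReal = ∑ j, (μ (S ∩ {ω | V ω = j})).toReal := by
  simpa only [iUnion_inter_fiber_eq, measureReal_def] using
    measureReal_iUnion_fintype (μ := μ) (pairwise_disjoint_inter_fiber V S)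
      fun j => hS.inter (hV j)

lemma setIntegral_eq_sum_inter_fiber {Y : Ω → ℝ} (hY : Integrable Y μ)
    (hV : ∀ j, MeasurableSet {ω | V ω = j}) (hS : MeasurableSet S) :
    ∫ ω in S, Y ω ∂μ = ∑ j, ∫ ω in S ∩ {ω | V ω = j}, Y ω ∂μ := by
  simpa only [iUnion_inter_fiber_eq] using
    integral_iUnion_fintype (fun j => hS.inter (hV j)) (pairwise_disjoint_inter_fiber V S)
      fun _ => hY.integrableOn

end Partition

lemma mul_mul_self_pos_and_abs_mul_lt_of_pos_of_lt_one {a d : ℝ} (ha : a ≠ 0) (hd₀ : 0 < d)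
    (hd₁ : d < 1) :
    0 < a * d * a ∧ |a * d| < |a| := by
  refine ⟨by nlinarith [mul_pos (mul_self_pos.2 ha) hd₀], ?_⟩
  rw [abs_mul, abs_of_pos hd₀]
  exact mul_lt_of_lt_one_right (abs_pos.2 ha) hd₁

theorem naive_contrast_attenuation_general
    {Ω : Type*} [MeasurableSpace Ω]
    (μ : Measure Ω) [IsProbabilityMeasure μ]
    (V Vstar : Ω → Fin 2) (Y : Ω → ℝ) (α₀ α₁ : ℝ)
    (hV : Measurable V) (hVstar : Measurable Vstar)
    (hYint : Integrable Y μ)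
    (hposVstar : ∀ k : Fin 2, 0 < (μ {ω | Vstar ω = k}).toReal)
    (hnondiff : ∀ A : Set ℝ, MeasurableSet A → ∀ j k : Fin 2,
      (μ (Y ⁻¹' A ∩ {ω | Vstar ω = k} ∩ {ω | V ω = j})).toReal *
          (μ {ω | V ω = j}).toReal =
        (μ (Y ⁻¹' A ∩ {ω | V ω = j})).toReal *
          (μ ({ω | Vstar ω = k} ∩ {ω | V ω = j})).toReal)
    (hmeans : ∀ j : Fin 2,
      (∫ ω in {ω | V ω = j}, Y ω ∂μ) / (μ {ω | V ω = j}).toReal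
        = α₀ + α₁ * ((j : ℕ) : ℝ)) :
    -- reclassification probabilities q k j = P(V = j | V* = k)
    let q : Fin 2 → Fin 2 → ℝ := fun k j =>
      (μ ({ω | V ω = j} ∩ {ω | Vstar ω = k})).toReal / (μ {ω | Vstar ω = k}).toReal
    -- naive mean contrast based on the misclassified covariate
    let Δ : ℝ :=
      (∫ ω in {ω | Vstar ω = 1}, Y ω ∂μ) / (μ {ω | Vstar ω = 1}).toReal -
        (∫ ω in {ω | Vstar ω = 0}, Y ω ∂μ) / (μ {ω | Vstar ω = 0}).toReal
    Δ = α₁ * (q 1 1 - q 0 1) ∧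
      (0 < q 1 1 - q 0 1 → q 1 1 - q 0 1 < 1 → α₁ ≠ 0 →
        0 < Δ * α₁ ∧ |Δ| < |α₁|) := by
  intro q Δ
  have hfiber {W : Ω → Fin 2} (hW : Measurable W) (j : Fin 2) : MeasurableSet {ω | W ω = j} :=
    hW (measurableSet_singleton j)
  have hcell (k j : Fin 2) : ∫ ω in {ω | Vstar ω = k} ∩ {ω | V ω = j}, Y ω ∂μ
      = (μ ({ω | Vstar ω = k} ∩ {ω | V ω = j})).toReal * (α₀ + α₁ * ((j : ℕ) : ℝ)) := by
    rw [← hmeans j]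
    exact LawProportional.setIntegral_eq_mul_div hYint.aemeasurable
      ((hfiber hVstar k).inter (hfiber hV j)) (hfiber hV j) Set.inter_subset_right
      fun A hA => by simpa only [Set.inter_assoc] using hnondiff A hA j k
  have hcond (k : Fin 2) :
      (∫ ω in {ω | Vstar ω = k}, Y ω ∂μ) / (μ {ω | Vstar ω = k}).toReal = α₀ + α₁ * q k 1 := by
    have hmass := measure_toReal_eq_sum_inter_fiber (μ := μ) (hfiber hV) (hfiber hVstar k)
    rw [setIntegral_eq_sum_inter_fiber hYint (hfiber hV) (hfiber hVstar k)]
    simp only [Fin.sum_univ_two, hcell, q, Set.inter_comm {ω | V ω = 1}, Fin.val_zero,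
      Fin.val_one, Nat.cast_zero, Nat.cast_one] at hmass ⊢
    field_simp [(hposVstar k).ne']
    linear_combination -α₀ * hmass
  have hΔ : Δ = α₁ * (q 1 1 - q 0 1) := by
    simp only [Δ, hcond]
    ring
  refine ⟨hΔ, fun hd₀ hd₁ hα => ?_⟩
  rw [hΔ]
  exact mul_mul_self_pos_and_abs_mul_lt_of_pos_of_lt_one hα hd₀ hd₁

/-- For a binary covariate with nondifferential misclassification and true regression means
`E[Y | V = j] = α₀ + α₁ j`, the naive mean contrast based on the misclassified covariate
equals `α₁ (q₁₁ − q₀₁)`; hence, whenever `0 < q₁₁ − q₀₁ < 1` and `α₁ ≠ 0`, the naive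
contrast has the same sign as `α₁` and strictly smaller absolute value (attenuation bias). -/
theorem naive_contrast_attenuation
    {Ω : Type*} [MeasurableSpace Ω]
    (μ : Measure Ω) [IsProbabilityMeasure μ]
    (V Vstar : Ω → Fin 2) (Y : Ω → ℝ) (α₀ α₁ : ℝ)
    (hV : Measurable V) (hVstar : Measurable Vstar) (hY : Measurable Y)
    (hYint : Integrable Y μ)
    (hposV : ∀ j : Fin 2, 0 < (μ {ω | V ω = j}).toReal)
    (hposVstar : ∀ k : Fin 2, 0 < (μ {ω | Vstar ω = k}).toReal)
    (hnondiff : ∀ A : Set ℝ, MeasurableSet A → ∀ j k : Fin 2,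
      (μ (Y ⁻¹' A ∩ {ω | Vstar ω = k} ∩ {ω | V ω = j})).toReal *
          (μ {ω | V ω = j}).toReal =
        (μ (Y ⁻¹' A ∩ {ω | V ω = j})).toReal *
          (μ ({ω | Vstar ω = k} ∩ {ω | V ω = j})).toReal)
    (hmeans : ∀ j : Fin 2,
      (∫ ω in {ω | V ω = j}, Y ω ∂μ) / (μ {ω | V ω = j}).toReal
        = α₀ + α₁ * ((j : ℕ) : ℝ)) :
    -- reclassification probabilities q k j = P(V = j | V* = k)
    let q : Fin 2 → Fin 2 → ℝ := fun k j =>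
      (μ ({ω | V ω = j} ∩ {ω | Vstar ω = k})).toReal / (μ {ω | Vstar ω = k}).toReal
    -- naive mean contrast based on the misclassified covariate
    let Δ : ℝ :=
      (∫ ω in {ω | Vstar ω = 1}, Y ω ∂μ) / (μ {ω | Vstar ω = 1}).toReal -
        (∫ ω in {ω | Vstar ω = 0}, Y ω ∂μ) / (μ {ω | Vstar ω = 0}).toReal
    Δ = α₁ * (q 1 1 - q 0 1) ∧
      (0 < q 1 1 - q 0 1 → q 1 1 - q 0 1 < 1 → α₁ ≠ 0 →
        0 < Δ * α₁ ∧ |Δ| < |α₁|) :=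
  naive_contrast_attenuation_general μ V Vstar Y α₀ α₁ hV hVstar hYint hposVstar hnondiff hmeans
end

section
/- Let σ, σ' > 0, q, q' ∈ (0, 1), and μ₀ < μ₁, μ₀' < μ₁' be real numbers. If for every y ∈ ℝ, q·φ(y; μ₀, σ) + (1 − q)·φ(y; μ₁, σ) = q'·φ(y; μ₀', σ') + (1 − q')·φ(y; μ₁', σ'), then q = q', μ₀ = μ₀', μ₁ = μ₁', and σ = σ'. That is, a proper two-component mixture of Gaussian densities with a common standard deviation and ordered means uniquely determines its weight, its two means, and its standard deviation. -/
/-!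
Divide both mixtures by the Gaussian component that dominates as `y → ∞`: the one with the
largest standard deviation and, among those, the largest mean. Ordering parameters `(σ, μ)`
lexicographically, `φ(y; μ, s) / φ(y; ν, σ) → 0` whenever `(s, μ) < (σ, ν)`. Hence the
dominant components of the two sides must coincide, the limit of the ratio is `1 - q` on
one side and `1 - q'` on the other, and what remains is a single Gaussian on each side.
-/

/-- The Gaussian density with mean `μ` and standard deviation `σ > 0`. -/
noncomputable def gaussDensity (μ σ y : ℝ) : ℝ :=
  (σ * Real.sqrt (2 * Real.pi))⁻¹ * Real.exp (-(y - μ) ^ 2 / (2 * σ ^ 2))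

open Filter Topology

noncomputable def gaussMixture (q μ₀ μ₁ σ y : ℝ) : ℝ :=
  q * gaussDensity μ₀ σ y + (1 - q) * gaussDensity μ₁ σ y

lemma gaussDensity_pos {μ σ : ℝ} (hσ : 0 < σ) (y : ℝ) : 0 < gaussDensity μ σ y := by
  unfold gaussDensity
  positivity

lemma tendsto_quadratic_atBot {a b : ℝ} (h : a < 0 ∨ a = 0 ∧ b < 0) (c : ℝ) :
    Tendsto (fun y : ℝ => a * y ^ 2 + b * y + c) atTop atBot := by
  apply tendsto_atBot_add_const_right
  rcases h with ha | ⟨rfl, hb⟩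
  · have hlin : Tendsto (fun y : ℝ => a * y + b) atTop atBot :=
      tendsto_atBot_add_const_right _ b ((tendsto_const_mul_atBot_of_neg ha).mpr tendsto_id)
    exact (tendsto_id.atTop_mul_atBot₀ hlin).congr fun y => by simp only [id]; ring
  · simpa using (tendsto_const_mul_atBot_of_neg hb).mpr tendsto_id

lemma gaussDensity_div_gaussDensity {μ ν s σ : ℝ} (hs : s ≠ 0) (hσ : σ ≠ 0) (y : ℝ) :
    gaussDensity μ s y / gaussDensity ν σ y =
      σ / s * Real.exp ((1 / (2 * σ ^ 2) - 1 / (2 * s ^ 2)) * y ^ 2 +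
        (μ / s ^ 2 - ν / σ ^ 2) * y + (ν ^ 2 / (2 * σ ^ 2) - μ ^ 2 / (2 * s ^ 2))) := by
  have hexp : (1 / (2 * σ ^ 2) - 1 / (2 * s ^ 2)) * y ^ 2 + (μ / s ^ 2 - ν / σ ^ 2) * y +
      (ν ^ 2 / (2 * σ ^ 2) - μ ^ 2 / (2 * s ^ 2)) =
      -(y - μ) ^ 2 / (2 * s ^ 2) - -(y - ν) ^ 2 / (2 * σ ^ 2) := by
    field_simp
    ring
  have hπ : Real.sqrt (2 * Real.pi) ≠ 0 := by positivity
  rw [gaussDensity, gaussDensity, hexp, Real.exp_sub]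
  field_simp

lemma tendsto_gaussDensity_div_gaussDensity_of_lt {μ ν s σ : ℝ} (hs : 0 < s)
    (hlt : toLex (s, μ) < toLex (σ, ν)) :
    Tendsto (fun y => gaussDensity μ s y / gaussDensity ν σ y) atTop (𝓝 0) := by
  rw [Prod.Lex.toLex_lt_toLex] at hlt
  have hσ : 0 < σ := by
    rcases hlt with h | ⟨h, -⟩
    exacts [hs.trans h, hs.trans_eq h]
  have hcoeff : 1 / (2 * σ ^ 2) - 1 / (2 * s ^ 2) < 0 ∨
      1 / (2 * σ ^ 2) - 1 / (2 * s ^ 2) = 0 ∧ μ / s ^ 2 - ν / σ ^ 2 < 0 := by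
    rcases hlt with h | ⟨rfl, h⟩
    · left
      have : 1 / (2 * σ ^ 2) < 1 / (2 * s ^ 2) := by gcongr
      linarith
    · right
      refine ⟨sub_self _, ?_⟩
      rw [← sub_div]
      exact div_neg_of_neg_of_pos (sub_neg.mpr h) (by positivity)
  have hexp := Real.tendsto_exp_atBot.comp (tendsto_quadratic_atBot hcoeff
    (ν ^ 2 / (2 * σ ^ 2) - μ ^ 2 / (2 * s ^ 2)))
  simpa [gaussDensity_div_gaussDensity hs.ne' hσ.ne'] using hexp.const_mul (σ / s)

lemma tendsto_gaussDensity_div_self {ν σ : ℝ} (hσ : 0 < σ) :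
    Tendsto (fun y => gaussDensity ν σ y / gaussDensity ν σ y) atTop (𝓝 1) :=
  tendsto_const_nhds.congr fun y => (div_self (gaussDensity_pos hσ y).ne').symm

lemma gaussDensity_injective {μ ν s σ : ℝ} (hs : 0 < s) (hσ : 0 < σ)
    (h : ∀ y, gaussDensity μ s y = gaussDensity ν σ y) : s = σ ∧ μ = ν := by
  have not_lt_of_eq : ∀ {μ ν s σ : ℝ}, 0 < s → 0 < σ →
      (∀ y, gaussDensity μ s y = gaussDensity ν σ y) → ¬ toLex (s, μ) < toLex (σ, ν) :=
    fun hs hσ h hlt =>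
      zero_ne_one (tendsto_nhds_unique (tendsto_gaussDensity_div_gaussDensity_of_lt hs hlt)
        (by simpa only [h] using tendsto_gaussDensity_div_self hσ))
  have heq : toLex (s, μ) = toLex (σ, ν) :=
    le_antisymm (not_lt.mp (not_lt_of_eq hσ hs fun y => (h y).symm))
      (not_lt.mp (not_lt_of_eq hs hσ h))
  simpa using heq

lemma tendsto_gaussMixture_div {q μ₀ μ₁ σ ν τ a b : ℝ}
    (h₀ : Tendsto (fun y => gaussDensity μ₀ σ y / gaussDensity ν τ y) atTop (𝓝 a))
    (h₁ : Tendsto (fun y => gaussDensity μ₁ σ y / gaussDensity ν τ y) atTop (𝓝 b)) :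
    Tendsto (fun y => gaussMixture q μ₀ μ₁ σ y / gaussDensity ν τ y) atTop
      (𝓝 (q * a + (1 - q) * b)) := by
  simp only [gaussMixture, add_div, mul_div_assoc]
  exact (h₀.const_mul q).add (h₁.const_mul (1 - q))

lemma tendsto_gaussMixture_div_top {q μ₀ μ₁ σ : ℝ} (hσ : 0 < σ) (hμ : μ₀ < μ₁) :
    Tendsto (fun y => gaussMixture q μ₀ μ₁ σ y / gaussDensity μ₁ σ y) atTop (𝓝 (1 - q)) := by
  have hlt : toLex (σ, μ₀) < toLex (σ, μ₁) := Prod.Lex.toLex_lt_toLex.mpr (.inr ⟨rfl, hμ⟩)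
  simpa using tendsto_gaussMixture_div (q := q)
    (tendsto_gaussDensity_div_gaussDensity_of_lt hσ hlt)
    (tendsto_gaussDensity_div_self hσ)

lemma toLex_le_of_gaussMixture_eq {q q' μ₀ μ₁ μ₀' μ₁' σ σ' : ℝ} (hσ : 0 < σ) (hσ' : 0 < σ')
    (hq : q < 1) (hμ : μ₀ < μ₁) (hμ' : μ₀' < μ₁')
    (heq : ∀ y, gaussMixture q μ₀ μ₁ σ y = gaussMixture q' μ₀' μ₁' σ' y) :
    toLex (σ, μ₁) ≤ toLex (σ', μ₁') := by
  by_contra! hlt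
  have h₁ : toLex (σ', μ₀') < toLex (σ', μ₁') := Prod.Lex.toLex_lt_toLex.mpr (.inr ⟨rfl, hμ'⟩)
  have hzero := tendsto_gaussMixture_div (q := q')
    (tendsto_gaussDensity_div_gaussDensity_of_lt hσ' (h₁.trans hlt))
    (tendsto_gaussDensity_div_gaussDensity_of_lt hσ' hlt)
  simp only [← heq] at hzero
  have := tendsto_nhds_unique (tendsto_gaussMixture_div_top hσ hμ) hzero
  linarith

/-- A proper two-component mixture of Gaussian densities with a common standard deviation
and ordered means uniquely determines its weight, its two means, and its standard
deviation. -/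
theorem two_component_gaussian_mixture_identifiable
    (σ σ' : ℝ) (hσ : 0 < σ) (hσ' : 0 < σ')
    (q q' : ℝ) (hq : q ∈ Set.Ioo (0 : ℝ) 1) (hq' : q' ∈ Set.Ioo (0 : ℝ) 1)
    (μ₀ μ₁ μ₀' μ₁' : ℝ) (hμ : μ₀ < μ₁) (hμ' : μ₀' < μ₁')
    (heq : ∀ y : ℝ,
      q * gaussDensity μ₀ σ y + (1 - q) * gaussDensity μ₁ σ y =
        q' * gaussDensity μ₀' σ' y + (1 - q') * gaussDensity μ₁' σ' y) :
    q = q' ∧ μ₀ = μ₀' ∧ μ₁ = μ₁' ∧ σ = σ' := by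
  obtain ⟨rfl, rfl⟩ : σ = σ' ∧ μ₁ = μ₁' := by
    simpa using le_antisymm (toLex_le_of_gaussMixture_eq hσ hσ' hq.2 hμ hμ' heq)
      (toLex_le_of_gaussMixture_eq hσ' hσ hq'.2 hμ' hμ fun y => (heq y).symm)
  obtain rfl : q = q' := by
    have hlim := tendsto_gaussMixture_div_top (q := q') hσ hμ'
    simp only [gaussMixture, ← heq] at hlim
    linarith [tendsto_nhds_unique (tendsto_gaussMixture_div_top hσ hμ) hlim]
  have hcomp : ∀ y, gaussDensity μ₀ σ y = gaussDensity μ₀' σ y := fun y =>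
    mul_left_cancel₀ hq.1.ne' (by linarith [heq y])
  exact ⟨rfl, (gaussDensity_injective hσ hσ hcomp).2, rfl, rfl⟩
end

section
/- Finite mixtures of Poisson distributions are identifiable: let n, m ≥ 1, let w : Fin n → ℝ and w' : Fin m → ℝ be weights with wᵢ > 0, Σᵢ wᵢ = 1, w'ⱼ > 0, Σⱼ w'ⱼ = 1, and let λ : Fin n → ℝ and λ' : Fin m → ℝ be rates with every λᵢ, λ'ⱼ > 0, the λᵢ pairwise distinct and the λ'ⱼ pairwise distinct. If Σ_{i ∈ Fin n} wᵢ p(t; λᵢ) = Σ_{j ∈ Fin m} w'ⱼ p(t; λ'ⱼ) for every t ∈ ℕ, then n = m and there exists a bijection e : Fin n ≃ Fin m with w'_{e(i)} = wᵢ and λ'_{e(i)} = λᵢ for all i. -/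
/-!
Write the mixture as the linear combination `∑ x, μ x • poissonPMF x` against its finitely
supported mixing measure `μ = ∑ i, w i • δ_{λ i}`. The sequences `t ↦ e^{-x} x^t / t!` are
linearly independent over `ℝ`: after rescaling, they are the characters `t ↦ x^t` of the monoid
`ℕ`, which are independent by Dedekind's lemma. Hence equal mixtures have equal mixing measures,
and two finitely supported measures with nonzero masses at distinct atoms coincide only if their
atoms and masses match up.
-/

/-- The Poisson probability mass function with rate `λ`. -/
noncomputable def poissonPMF (lam : ℝ) (t : ℕ) : ℝ :=
  Real.exp (-lam) * lam ^ t / (Nat.factorial t)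

open Finsupp

theorem linearIndependent_fun_pow (R : Type*) [CommRing R] [IsDomain R] :
    LinearIndependent R (fun (x : R) (t : ℕ) => x ^ t) :=
  (linearIndependent_monoidHom (Multiplicative ℕ) R).comp (powersHom R) (powersHom R).injective

theorem linearIndependent_poissonPMF : LinearIndependent ℝ poissonPMF := by
  let divFactorial : (ℕ → ℝ) →ₗ[ℝ] ℕ → ℝ :=
    LinearMap.pi fun t => ((t.factorial : ℝ)⁻¹) • LinearMap.proj t
  have hker : LinearMap.ker divFactorial = ⊥ :=
    LinearMap.ker_eq_bot'.mpr fun f hf => funext fun t => by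
      simpa [divFactorial, Nat.factorial_ne_zero] using congrFun hf t
  have hpoisson : poissonPMF = (fun x => Units.mk0 (Real.exp (-x)) (Real.exp_ne_zero _)) •
      (divFactorial ∘ fun (x : ℝ) (t : ℕ) => x ^ t) := by
    ext x t
    change Real.exp (-x) * x ^ t / t.factorial = Real.exp (-x) * ((t.factorial : ℝ)⁻¹ * x ^ t)
    ring
  rw [hpoisson]
  exact ((linearIndependent_fun_pow ℝ).map' divFactorial hker).units_smul _

section mixingMeasure

variable {ι κ α M : Type*} [AddCommMonoid M]

noncomputable def mixingMeasure [Finite ι] (w : ι → M) (f : ι → α) : α →₀ M :=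
  mapDomain f (equivFunOnFinite.symm w)

theorem mixingMeasure_apply_self [Finite ι] {f : ι → α} (hf : f.Injective) (w : ι → M) (i : ι) :
    mixingMeasure w f (f i) = w i := by
  simp [mixingMeasure, mapDomain_apply hf]

theorem mem_range_iff_mixingMeasure_ne_zero [Finite ι] {f : ι → α} (hf : f.Injective)
    {w : ι → M} (hw : ∀ i, w i ≠ 0) (x : α) : x ∈ Set.range f ↔ mixingMeasure w f x ≠ 0 := by
  refine ⟨?_, mem_range_of_mapDomain_ne_zero⟩
  rintro ⟨i, rfl⟩
  rw [mixingMeasure_apply_self hf]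
  exact hw i

theorem linearCombination_mixingMeasure [Fintype ι] {R : Type*} [Semiring R] [Module R M]
    (v : α → M) (w : ι → R) (f : ι → α) :
    linearCombination R v (mixingMeasure w f) = ∑ i, w i • v (f i) := by
  rw [mixingMeasure, linearCombination_mapDomain]
  exact linearCombination_eq_fintype_linearCombination_apply R (v ∘ f) w

theorem exists_equiv_of_mixingMeasure_eq [Finite ι] [Finite κ] {w : ι → M} {w' : κ → M}
    {f : ι → α} {g : κ → α} (hf : f.Injective) (hg : g.Injective)
    (hw : ∀ i, w i ≠ 0) (hw' : ∀ j, w' j ≠ 0) (h : mixingMeasure w f = mixingMeasure w' g) :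
    ∃ e : ι ≃ κ, ∀ i, w' (e i) = w i ∧ g (e i) = f i := by
  have hrange : Set.range f = Set.range g := by
    ext x
    rw [mem_range_iff_mixingMeasure_ne_zero hf hw, mem_range_iff_mixingMeasure_ne_zero hg hw', h]
  let e : ι ≃ κ :=
    (Equiv.ofInjective f hf).trans ((Equiv.setCongr hrange).trans (Equiv.ofInjective g hg).symm)
  have hge : ∀ i, g (e i) = f i := fun i => Equiv.apply_ofInjective_symm hg _
  refine ⟨e, fun i => ⟨?_, hge i⟩⟩
  rw [← mixingMeasure_apply_self hg w', hge, ← h, mixingMeasure_apply_self hf]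

end mixingMeasure

theorem poisson_mixture_identifiable_general
    {n m : ℕ}
    (w : Fin n → ℝ) (w' : Fin m → ℝ)
    (lam : Fin n → ℝ) (lam' : Fin m → ℝ)
    (hw : ∀ i, 0 < w i)
    (hw' : ∀ j, 0 < w' j)
    (hdist : Function.Injective lam) (hdist' : Function.Injective lam')
    (heq : ∀ t : ℕ,
      ∑ i, w i * poissonPMF (lam i) t = ∑ j, w' j * poissonPMF (lam' j) t) :
    n = m ∧ ∃ e : Fin n ≃ Fin m, ∀ i, w' (e i) = w i ∧ lam' (e i) = lam i := by
  have hmix : mixingMeasure w lam = mixingMeasure w' lam' := by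
    apply linearIndependent_poissonPMF.finsuppLinearCombination_injective
    rw [linearCombination_mixingMeasure, linearCombination_mixingMeasure]
    ext t
    simpa using heq t
  obtain ⟨e, he⟩ := exists_equiv_of_mixingMeasure_eq hdist hdist' (fun i => (hw i).ne')
    (fun j => (hw' j).ne') hmix
  exact ⟨Fin.equiv_iff_eq.mp ⟨e⟩, e, he⟩

/-- Finite mixtures of Poisson distributions are identifiable: two finite mixtures with
positive weights summing to one and pairwise distinct positive rates that agree on every
`t ∈ ℕ` must have the same number of components and matching parameters up to a bijection
of the component labels. -/
theorem poisson_mixture_identifiable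
    {n m : ℕ} (hn : 1 ≤ n) (hm : 1 ≤ m)
    (w : Fin n → ℝ) (w' : Fin m → ℝ)
    (lam : Fin n → ℝ) (lam' : Fin m → ℝ)
    (hw : ∀ i, 0 < w i) (hwsum : ∑ i, w i = 1)
    (hw' : ∀ j, 0 < w' j) (hw'sum : ∑ j, w' j = 1)
    (hlam : ∀ i, 0 < lam i) (hlam' : ∀ j, 0 < lam' j)
    (hdist : Function.Injective lam) (hdist' : Function.Injective lam')
    (heq : ∀ t : ℕ,
      ∑ i, w i * poissonPMF (lam i) t = ∑ j, w' j * poissonPMF (lam' j) t) :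
    n = m ∧ ∃ e : Fin n ≃ Fin m, ∀ i, w' (e i) = w i ∧ lam' (e i) = lam i :=
  poisson_mixture_identifiable_general w w' lam lam' hw hw' hdist hdist' heq
end

section
/- Finite mixtures of gamma distributions are identifiable: let n, m ≥ 1, let w : Fin n → ℝ and w' : Fin m → ℝ be weights with wᵢ > 0, Σᵢ wᵢ = 1, w'ⱼ > 0, Σⱼ w'ⱼ = 1, and let (aᵢ, bᵢ)_{i ∈ Fin n} and (a'ⱼ, b'ⱼ)_{j ∈ Fin m} be shape–rate pairs with all entries positive and the pairs within each family pairwise distinct. If Σ_{i ∈ Fin n} wᵢ g(y; aᵢ, bᵢ) = Σ_{j ∈ Fin m} w'ⱼ g(y; a'ⱼ, b'ⱼ) for every y > 0, then n = m and there exists a bijection e : Fin n ≃ Fin m with w'_{e(i)} = wᵢ, a'_{e(i)} = aᵢ and b'_{e(i)} = bᵢ for all i. -/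
/-!
Among the functions `y ↦ y^α e^{-β y}` on `(0, ∞)`, the one with the smallest rate `β`, and among
those the largest exponent `α`, dominates all others as `y → ∞`; dividing a vanishing linear
combination by it and letting `y → ∞` kills its coefficient, so these functions are linearly
independent. A gamma mixture is a linear combination of them with nonzero coefficients
`wᵢ bᵢ^{aᵢ} / Γ(aᵢ)`, and two linear combinations of distinct independent vectors with nonzero
coefficients agree only if they have the same vectors and coefficients.
-/

noncomputable def gammaDensity (a b y : ℝ) : ℝ :=
  if 0 < y then b ^ a / Real.Gamma a * y ^ (a - 1) * Real.exp (-(b * y)) else 0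

open Function Filter Topology Real

theorem LinearIndependent.exists_equiv_of_sum_smul_eq {R M κ ι ι' : Type*} [Semiring R]
    [AddCommMonoid M] [Module R M] [Fintype ι] [Fintype ι'] {v : κ → M}
    (hv : LinearIndependent R v) {p : ι → κ} {p' : ι' → κ} (hp : Injective p) (hp' : Injective p')
    {w : ι → R} {w' : ι' → R} (hw : ∀ i, w i ≠ 0) (hw' : ∀ j, w' j ≠ 0)
    (h : ∑ i, w i • v (p i) = ∑ j, w' j • v (p' j)) :
    ∃ e : ι ≃ ι', ∀ i, p' (e i) = p i ∧ w' (e i) = w i := by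
  set f := Finsupp.mapDomain p ((Finsupp.linearEquivFunOnFinite R R ι).symm w)
  set f' := Finsupp.mapDomain p' ((Finsupp.linearEquivFunOnFinite R R ι').symm w')
  have hff' : f = f' := hv <| by
    simp only [f, f', Finsupp.linearCombination_mapDomain,
      Finsupp.linearCombination_eq_fintype_linearCombination_apply]
    exact h
  have hf : ∀ i, f (p i) = w i := fun i => Finsupp.mapDomain_apply hp _ i
  have hf' : ∀ j, f' (p' j) = w' j := fun j => Finsupp.mapDomain_apply hp' _ j
  have hrange : Set.range p = Set.range p' := by
    ext k
    constructor
    · rintro ⟨i, rfl⟩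
      by_contra hk
      exact hw i (hf i ▸ hff' ▸ Finsupp.mapDomain_of_notMem_range _ _ hk)
    · rintro ⟨j, rfl⟩
      by_contra hk
      exact hw' j (hf' j ▸ hff' ▸ Finsupp.mapDomain_of_notMem_range _ _ hk)
  let e := (Equiv.ofInjective p hp).trans
    ((Equiv.setCongr hrange).trans (Equiv.ofInjective p' hp').symm)
  have hpe : ∀ i, p' (e i) = p i := fun i => Equiv.apply_ofInjective_symm hp' _
  exact ⟨e, fun i => ⟨hpe i, by rw [← hf', ← hff', hpe, hf]⟩⟩

noncomputable def rpowMulExpNeg (p : ℝ × ℝ) (y : Set.Ioi (0 : ℝ)) : ℝ :=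
  (y : ℝ) ^ p.1 * exp (-(p.2 * y))

/-- `decayOrder p < decayOrder q` exactly when `y ^ q.1 * exp (-(q.2 * y))` is
`o(y ^ p.1 * exp (-(p.2 * y)))` as `y → ∞`. -/
def decayOrder (p : ℝ × ℝ) : Lex (ℝ × ℝ) := toLex (p.2, -p.1)

theorem decayOrder_injective : Function.Injective decayOrder := by
  intro p q h
  simp only [decayOrder, toLex_inj, Prod.mk.injEq, neg_inj] at h
  exact Prod.ext h.2 h.1

theorem tendsto_rpow_sub_mul_exp_neg_sub_of_decayOrder_lt {p q : ℝ × ℝ}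
    (h : decayOrder p < decayOrder q) :
    Tendsto (fun y : ℝ => y ^ (q.1 - p.1) * exp (-((q.2 - p.2) * y))) atTop (𝓝 0) := by
  rcases Prod.Lex.toLex_lt_toLex.1 h with hβ | ⟨hβ, hα⟩
  · simpa only [neg_mul] using
      tendsto_rpow_mul_exp_neg_mul_atTop_nhds_zero (q.1 - p.1) (q.2 - p.2) (sub_pos.2 hβ)
  · have hβ : q.2 - p.2 = 0 := by simp only at hβ; linarith
    have hα : 0 < p.1 - q.1 := by simp only at hα; linarith
    simpa [hβ] using tendsto_rpow_neg_atTop hα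

theorem rpowMulExpNeg_mul_rpow_neg_mul_exp {p q : ℝ × ℝ} (y : Set.Ioi (0 : ℝ)) :
    rpowMulExpNeg q y * ((y : ℝ) ^ (-p.1) * exp (p.2 * y)) =
      (y : ℝ) ^ (q.1 - p.1) * exp (-((q.2 - p.2) * y)) := by
  rw [rpowMulExpNeg, sub_eq_add_neg q.1, rpow_add y.2,
    show -((q.2 - p.2) * y) = -(q.2 * y) + p.2 * y by ring, exp_add]
  ring

theorem linearIndependent_rpowMulExpNeg : LinearIndependent ℝ rpowMulExpNeg := by
  classical
  rw [linearIndependent_iff']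
  intro s c
  induction s using Finset.induction_on_min_value decayOrder with
  | empty => simp
  | insert p s hps hmin ih =>
    intro hsum
    have hp : c p = 0 := by
      set F : ℝ → ℝ := fun y => c p + ∑ q ∈ s, c q * (y ^ (q.1 - p.1) * exp (-((q.2 - p.2) * y)))
      have hlim : Tendsto F atTop (𝓝 (c p)) := by
        have hs := tendsto_finsetSum s fun q hq =>
          (tendsto_rpow_sub_mul_exp_neg_sub_of_decayOrder_lt ((hmin q hq).lt_of_ne
            (decayOrder_injective.ne (ne_of_mem_of_not_mem hq hps).symm))).const_mul (c q)
        simpa using tendsto_const_nhds.add hs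
      have hF : ∀ y : Set.Ioi (0 : ℝ), F y = 0 := by
        intro y
        calc F y = (∑ q ∈ insert p s, c q * rpowMulExpNeg q y) *
              ((y : ℝ) ^ (-p.1) * exp (p.2 * y)) := by
              simp_rw [Finset.sum_mul, Finset.sum_insert hps, mul_assoc, rpowMulExpNeg_mul_rpow_neg_mul_exp]
              simp [F]
          _ = 0 := by
              have hy := congrFun hsum y
              simp only [Finset.sum_apply, Pi.smul_apply, smul_eq_mul, Pi.zero_apply] at hy
              rw [hy, zero_mul]
      refine tendsto_nhds_unique hlim (tendsto_const_nhds.congr' ?_)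
      filter_upwards [eventually_gt_atTop 0] with y hy
      exact (hF ⟨y, hy⟩).symm
    rw [Finset.sum_insert hps, hp, zero_smul, zero_add] at hsum
    intro q hq
    rcases Finset.mem_insert.1 hq with rfl | hq
    · exact hp
    · exact ih hsum q hq

theorem gammaDensity_of_pos {a b : ℝ} (y : Set.Ioi (0 : ℝ)) :
    gammaDensity a b y = b ^ a / Gamma a * rpowMulExpNeg (a - 1, b) y := by
  rw [gammaDensity, if_pos (show (0 : ℝ) < y from y.2), rpowMulExpNeg, mul_assoc]

theorem gamma_mixture_identifiable_general
    {n m : ℕ}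
    (w : Fin n → ℝ) (w' : Fin m → ℝ)
    (a b : Fin n → ℝ) (a' b' : Fin m → ℝ)
    (hw : ∀ i, 0 < w i)
    (hw' : ∀ j, 0 < w' j)
    (ha : ∀ i, 0 < a i) (hb : ∀ i, 0 < b i)
    (ha' : ∀ j, 0 < a' j) (hb' : ∀ j, 0 < b' j)
    (hdist : Function.Injective (fun i => (a i, b i)))
    (hdist' : Function.Injective (fun j => (a' j, b' j)))
    (heq : ∀ y : ℝ, 0 < y →
      ∑ i, w i * gammaDensity (a i) (b i) y = ∑ j, w' j * gammaDensity (a' j) (b' j) y) :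
    n = m ∧ ∃ e : Fin n ≃ Fin m, ∀ i,
      w' (e i) = w i ∧ a' (e i) = a i ∧ b' (e i) = b i := by
  have hnorm : ∀ {α β : ℝ}, 0 < α → 0 < β → 0 < β ^ α / Gamma α := fun hα hβ =>
    div_pos (rpow_pos_of_pos hβ _) (Gamma_pos_of_pos hα)
  have hshift : Injective (Prod.map (· - 1) id : ℝ × ℝ → ℝ × ℝ) :=
    sub_left_injective.prodMap injective_id
  obtain ⟨e, he⟩ := linearIndependent_rpowMulExpNeg.exists_equiv_of_sum_smul_eq
    (hshift.comp hdist) (hshift.comp hdist')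
    (w := fun i => w i * (b i ^ a i / Gamma (a i)))
    (w' := fun j => w' j * (b' j ^ a' j / Gamma (a' j)))
    (fun i => (mul_pos (hw i) (hnorm (ha i) (hb i))).ne')
    (fun j => (mul_pos (hw' j) (hnorm (ha' j) (hb' j))).ne')
    (funext fun y => by simpa [Finset.sum_apply, gammaDensity_of_pos, mul_assoc] using heq y y.2)
  refine ⟨by simpa using Fintype.card_congr e, e, fun i => ?_⟩
  obtain ⟨hp, hcoeff⟩ := he i
  simp only [comp_apply, Prod.map_apply, id_eq, Prod.mk.injEq, sub_left_inj] at hp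
  rw [hp.1, hp.2] at hcoeff
  exact ⟨mul_right_cancel₀ (hnorm (ha i) (hb i)).ne' hcoeff, hp⟩

/-- Finite mixtures of gamma distributions are identifiable: two finite mixtures with
positive weights summing to one and pairwise distinct positive (shape, rate) pairs that
agree at every `y > 0` must have the same number of components and matching parameters up
to a bijection of the component labels. -/
theorem gamma_mixture_identifiable
    {n m : ℕ} (hn : 1 ≤ n) (hm : 1 ≤ m)
    (w : Fin n → ℝ) (w' : Fin m → ℝ)
    (a b : Fin n → ℝ) (a' b' : Fin m → ℝ)
    (hw : ∀ i, 0 < w i) (hwsum : ∑ i, w i = 1)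
    (hw' : ∀ j, 0 < w' j) (hw'sum : ∑ j, w' j = 1)
    (ha : ∀ i, 0 < a i) (hb : ∀ i, 0 < b i)
    (ha' : ∀ j, 0 < a' j) (hb' : ∀ j, 0 < b' j)
    (hdist : Function.Injective (fun i => (a i, b i)))
    (hdist' : Function.Injective (fun j => (a' j, b' j)))
    (heq : ∀ y : ℝ, 0 < y →
      ∑ i, w i * gammaDensity (a i) (b i) y = ∑ j, w' j * gammaDensity (a' j) (b' j) y) :
    n = m ∧ ∃ e : Fin n ≃ Fin m, ∀ i,
      w' (e i) = w i ∧ a' (e i) = a i ∧ b' (e i) = b i :=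
  gamma_mixture_identifiable_general w w' a b a' b' hw hw' ha hb ha' hb' hdist hdist' heq
end

section
/- Let K = 2, assume P(V = j) > 0 and P(V* = k) > 0 for all j, k ∈ {0,1}, assume misclassification is nondifferential, and suppose Y is integrable ℕ-valued with conditional means E[Y · 1_{V = j}]/P(V = j) = exp(α₀ + α₁ j) for j ∈ {0,1} (Poisson log-linear model). Then E[Y · 1_{V* = k}]/P(V* = k) = q_{k0}·exp(α₀) + q_{k1}·exp(α₀ + α₁) for k ∈ {0,1}. Moreover, if α₁ > 0 and q₁₁ > q₀₁, then the naive log-scale contrast Δ = log(E[Y·1_{V*=1}]/P(V*=1)) − log(E[Y·1_{V*=0}]/P(V*=0)) satisfies 0 < Δ ≤ α₁, with Δ < α₁ unless q₀₀ = q₁₁ = 1 (i.e., unless there is no misclassification). -/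
/-!
Nondifferential misclassification makes the law of `Y` on a cell `{V = j} ∩ {V* = k}`
proportional to its law on `{V = j}`, so every cell carries the true mean `exp (α₀ + α₁ j)`;
summing over `j`, the naive mean given `V* = k` is the `q k`-weighted mixture of the true means.
For `0 < a < b` and `0 ≤ p < r ≤ 1` the mixtures `m p = (1 - p) a + p b` satisfy `m p < m r` and
`b m p - a m r = (b - a) ((1 - r) a + p b) ≥ 0`, so `0 < log m r - log m p ≤ log b - log a`,
strictly unless `p = 0` and `r = 1`.
-/

open MeasureTheory

section Transfer

variable {Ω : Type*} [MeasurableSpace Ω] {μ : Measure Ω} [IsFiniteMeasure μ] {X : Ω → ℝ}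
  {S T : Set Ω}

theorem measureReal_mul_setIntegral_eq_of_law_proportional (hX : Measurable X)
    (h : ∀ A : Set ℝ, MeasurableSet A →
      μ.real (X ⁻¹' A ∩ S) * μ.real T = μ.real (X ⁻¹' A ∩ T) * μ.real S) :
    μ.real T * ∫ ω in S, X ω ∂μ = μ.real S * ∫ ω in T, X ω ∂μ := by
  have hlaw : μ T • (μ.restrict S).map X = μ S • (μ.restrict T).map X := by
    ext A hA
    have hA' := h A hA
    simp only [measureReal_def, ← ENNReal.toReal_mul] at hA'
    rw [Measure.smul_apply, Measure.smul_apply, Measure.map_apply hX hA,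
      Measure.map_apply hX hA, Measure.restrict_apply (hX hA), Measure.restrict_apply (hX hA),
      smul_eq_mul, smul_eq_mul, mul_comm (μ T), mul_comm (μ S)]
    exact (ENNReal.toReal_eq_toReal_iff' (by finiteness) (by finiteness)).mp hA'
  have hint : ∀ U : Set Ω, ∫ x, x ∂(μ.restrict U).map X = ∫ ω in U, X ω ∂μ := fun U =>
    integral_map hX.aemeasurable aestronglyMeasurable_id
  simpa [integral_smul_measure, hint, measureReal_def] using congrArg (fun ν => ∫ x, x ∂ν) hlaw

theorem setIntegral_eq_mean_mul_of_law_proportional (hX : Measurable X) (hT : μ.real T ≠ 0)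
    (h : ∀ A : Set ℝ, MeasurableSet A →
      μ.real (X ⁻¹' A ∩ S) * μ.real T = μ.real (X ⁻¹' A ∩ T) * μ.real S) :
    ∫ ω in S, X ω ∂μ = (∫ ω in T, X ω ∂μ) / μ.real T * μ.real S := by
  have := measureReal_mul_setIntegral_eq_of_law_proportional hX h
  field_simp
  linarith

end Transfer

lemma iUnion_fiber_inter_eq {Ω ι : Type*} (V : Ω → ι) (S : Set Ω) :
    ⋃ j, {ω | V ω = j} ∩ S = S := by
  ext ω; simp

lemma pairwise_disjoint_fiber_inter {Ω ι : Type*} (V : Ω → ι) (S : Set Ω) :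
    Pairwise fun i j => Disjoint ({ω | V ω = i} ∩ S) ({ω | V ω = j} ∩ S) :=
  fun _ _ hij => Set.disjoint_left.2 fun _ h₁ h₂ => hij (h₁.1.symm.trans h₂.1)

section Fibers

variable {Ω ι : Type*} [MeasurableSpace Ω] {μ : Measure Ω} [Fintype ι] {V : Ω → ι} {S : Set Ω}

theorem setIntegral_eq_sum_fiber_inter {f : Ω → ℝ} (hV : ∀ j, MeasurableSet {ω | V ω = j})
    (hS : MeasurableSet S) (hf : IntegrableOn f S μ) :
    ∫ ω in S, f ω ∂μ = ∑ j, ∫ ω in {ω | V ω = j} ∩ S, f ω ∂μ := by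
  conv_lhs => rw [← iUnion_fiber_inter_eq V S]
  exact integral_iUnion_fintype (fun j => (hV j).inter hS) (pairwise_disjoint_fiber_inter V S)
    fun j => hf.mono_set Set.inter_subset_right

theorem measureReal_eq_sum_fiber_inter [IsFiniteMeasure μ] (hV : ∀ j, MeasurableSet {ω | V ω = j})
    (hS : MeasurableSet S) :
    μ.real S = ∑ j, μ.real ({ω | V ω = j} ∩ S) := by
  conv_lhs => rw [← iUnion_fiber_inter_eq V S]
  exact measureReal_iUnion_fintype (pairwise_disjoint_fiber_inter V S) fun j => (hV j).inter hS

end Fibers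

section Mixture

variable {Ω ι : Type*} [MeasurableSpace Ω] {μ : Measure Ω} [Fintype ι]

theorem setIntegral_div_measureReal_eq_sum {V : Ω → ι} {S : Set Ω} {f : Ω → ℝ} {m : ι → ℝ}
    (hV : ∀ j, MeasurableSet {ω | V ω = j}) (hS : MeasurableSet S) (hf : IntegrableOn f S μ)
    (hm : ∀ j, ∫ ω in {ω | V ω = j} ∩ S, f ω ∂μ = m j * μ.real ({ω | V ω = j} ∩ S)) :
    (∫ ω in S, f ω ∂μ) / μ.real S = ∑ j, μ.real ({ω | V ω = j} ∩ S) / μ.real S * m j := by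
  simp only [setIntegral_eq_sum_fiber_inter hV hS hf, Finset.sum_div, hm]
  exact Finset.sum_congr rfl fun j _ => by ring

theorem sum_measureReal_fiber_inter_div [IsFiniteMeasure μ] {V : Ω → ι} {S : Set Ω}
    (hV : ∀ j, MeasurableSet {ω | V ω = j}) (hS : MeasurableSet S) (hS₀ : μ.real S ≠ 0) :
    ∑ j, μ.real ({ω | V ω = j} ∩ S) / μ.real S = 1 := by
  rw [← Finset.sum_div, ← measureReal_eq_sum_fiber_inter hV hS, div_self hS₀]

theorem naive_mean_eq_sum_reclassification [IsFiniteMeasure μ] [MeasurableSpace ι]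
    [MeasurableSingletonClass ι] {V Vstar : Ω → ι} {X : Ω → ℝ} {m : ι → ℝ}
    (hV : Measurable V) (hVstar : Measurable Vstar) (hX : Measurable X) (hXint : Integrable X μ)
    (hposV : ∀ j, μ.real {ω | V ω = j} ≠ 0)
    (hnondiff : ∀ A : Set ℝ, MeasurableSet A → ∀ j k,
      μ.real (X ⁻¹' A ∩ {ω | Vstar ω = k} ∩ {ω | V ω = j}) * μ.real {ω | V ω = j} =
        μ.real (X ⁻¹' A ∩ {ω | V ω = j}) * μ.real ({ω | Vstar ω = k} ∩ {ω | V ω = j}))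
    (hm : ∀ j, (∫ ω in {ω | V ω = j}, X ω ∂μ) / μ.real {ω | V ω = j} = m j) (k : ι) :
    (∫ ω in {ω | Vstar ω = k}, X ω ∂μ) / μ.real {ω | Vstar ω = k} =
      ∑ j, μ.real ({ω | V ω = j} ∩ {ω | Vstar ω = k}) / μ.real {ω | Vstar ω = k} * m j := by
  refine setIntegral_div_measureReal_eq_sum (fun j => hV (measurableSet_singleton j))
    (hVstar (measurableSet_singleton k)) hXint.integrableOn fun j => ?_
  rw [Set.inter_comm, setIntegral_eq_mean_mul_of_law_proportional hX (hposV j)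
    fun A hA => by simpa only [Set.inter_assoc] using hnondiff A hA j k, hm j]

end Mixture

namespace Real

theorem log_sub_log_le_log_sub_log_iff {x y u v : ℝ} (hx : 0 < x) (hy : 0 < y) (hu : 0 < u)
    (hv : 0 < v) : log x - log y ≤ log u - log v ↔ x * v ≤ u * y := by
  rw [← log_div hx.ne' hy.ne', ← log_div hu.ne' hv.ne', log_le_log_iff (by positivity)
    (by positivity), div_le_div_iff₀ hy hv]

theorem log_sub_log_lt_log_sub_log_iff {x y u v : ℝ} (hx : 0 < x) (hy : 0 < y) (hu : 0 < u)
    (hv : 0 < v) : log x - log y < log u - log v ↔ x * v < u * y := by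
  rw [← log_div hx.ne' hy.ne', ← log_div hu.ne' hv.ne', log_lt_log_iff (by positivity)
    (by positivity), div_lt_div_iff₀ hy hv]

end Real

section Attenuation

variable {a b p r : ℝ}

lemma mul_mix_sub_mul_mix (a b p r : ℝ) :
    b * ((1 - p) * a + p * b) - a * ((1 - r) * a + r * b) = (b - a) * ((1 - r) * a + p * b) := by
  ring

lemma mix_pos (ha : 0 < a) (hab : a ≤ b) (hp : 0 ≤ p) : 0 < (1 - p) * a + p * b := by
  nlinarith

lemma mix_cross_nonneg (ha : 0 < a) (hab : a ≤ b) (hp : 0 ≤ p) (hr : r ≤ 1) :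
    0 ≤ (1 - r) * a + p * b := by
  nlinarith

theorem log_mix_sub_log_mix_pos (ha : 0 < a) (hab : a < b) (hp : 0 ≤ p) (hpr : p < r) :
    0 < Real.log ((1 - r) * a + r * b) - Real.log ((1 - p) * a + p * b) := by
  have hlt : (1 - p) * a + p * b < (1 - r) * a + r * b := by nlinarith
  linarith [Real.log_lt_log (mix_pos ha hab.le hp) hlt]

theorem log_mix_sub_log_mix_le (ha : 0 < a) (hab : a ≤ b) (hp : 0 ≤ p) (hr₀ : 0 ≤ r)
    (hr : r ≤ 1) :
    Real.log ((1 - r) * a + r * b) - Real.log ((1 - p) * a + p * b) ≤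
      Real.log b - Real.log a := by
  rw [Real.log_sub_log_le_log_sub_log_iff (mix_pos ha hab hr₀) (mix_pos ha hab hp)
    (ha.trans_le hab) ha]
  nlinarith [mul_mix_sub_mul_mix a b p r,
    mul_nonneg (sub_nonneg.2 hab) (mix_cross_nonneg ha hab hp hr)]

theorem log_mix_sub_log_mix_lt (ha : 0 < a) (hab : a < b) (hp : 0 ≤ p) (hr₀ : 0 ≤ r)
    (hr : r ≤ 1) (hmix : 0 < p ∨ r < 1) :
    Real.log ((1 - r) * a + r * b) - Real.log ((1 - p) * a + p * b) <
      Real.log b - Real.log a := by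
  rw [Real.log_sub_log_lt_log_sub_log_iff (mix_pos ha hab.le hr₀) (mix_pos ha hab.le hp)
    (ha.trans hab) ha]
  have hw : 0 < (1 - r) * a + p * b := by
    rcases hmix with hp₀ | hr₁ <;> nlinarith
  nlinarith [mul_mix_sub_mul_mix a b p r, mul_pos (sub_pos.2 hab) hw]

end Attenuation

/-- Poisson log-linear model with a misclassified binary covariate: under nondifferential
misclassification, the naive conditional means are the reclassification mixtures
`q_{k0} e^{α₀} + q_{k1} e^{α₀+α₁}`; moreover, when `α₁ > 0` and `q₁₁ > q₀₁`, the naive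
log-scale contrast `Δ` satisfies `0 < Δ ≤ α₁`, with `Δ < α₁` unless `q₀₀ = q₁₁ = 1`. -/
theorem poisson_naive_contrast_attenuation
    {Ω : Type*} [MeasurableSpace Ω]
    (μ : Measure Ω) [IsProbabilityMeasure μ]
    (V Vstar : Ω → Fin 2) (Y : Ω → ℕ) (α₀ α₁ : ℝ)
    (hV : Measurable V) (hVstar : Measurable Vstar) (hY : Measurable Y)
    (hYint : Integrable (fun ω => (Y ω : ℝ)) μ)
    (hposV : ∀ j : Fin 2, 0 < (μ {ω | V ω = j}).toReal)
    (hposVstar : ∀ k : Fin 2, 0 < (μ {ω | Vstar ω = k}).toReal)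
    (hnondiff : ∀ A : Set ℝ, MeasurableSet A → ∀ j k : Fin 2,
      (μ ((fun ω => (Y ω : ℝ)) ⁻¹' A ∩ {ω | Vstar ω = k} ∩ {ω | V ω = j})).toReal *
          (μ {ω | V ω = j}).toReal =
        (μ ((fun ω => (Y ω : ℝ)) ⁻¹' A ∩ {ω | V ω = j})).toReal *
          (μ ({ω | Vstar ω = k} ∩ {ω | V ω = j})).toReal)
    (hmeans : ∀ j : Fin 2,
      (∫ ω in {ω | V ω = j}, (Y ω : ℝ) ∂μ) / (μ {ω | V ω = j}).toReal
        = Real.exp (α₀ + α₁ * ((j : ℕ) : ℝ))) :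
    -- reclassification probabilities q k j = P(V = j | V* = k)
    let q : Fin 2 → Fin 2 → ℝ := fun k j =>
      (μ ({ω | V ω = j} ∩ {ω | Vstar ω = k})).toReal / (μ {ω | Vstar ω = k}).toReal
    -- naive log-scale contrast
    let Δ : ℝ :=
      Real.log ((∫ ω in {ω | Vstar ω = 1}, (Y ω : ℝ) ∂μ) / (μ {ω | Vstar ω = 1}).toReal) -
        Real.log ((∫ ω in {ω | Vstar ω = 0}, (Y ω : ℝ) ∂μ) / (μ {ω | Vstar ω = 0}).toReal)
    (∀ k : Fin 2,
      (∫ ω in {ω | Vstar ω = k}, (Y ω : ℝ) ∂μ) / (μ {ω | Vstar ω = k}).toReal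
        = q k 0 * Real.exp α₀ + q k 1 * Real.exp (α₀ + α₁)) ∧
      (0 < α₁ → q 0 1 < q 1 1 →
        (0 < Δ ∧ Δ ≤ α₁) ∧ (¬ (q 0 0 = 1 ∧ q 1 1 = 1) → Δ < α₁)) := by
  intro q Δ
  simp only [← measureReal_def] at hposV hposVstar hnondiff hmeans
  have hVfib (j : Fin 2) : MeasurableSet {ω | V ω = j} := hV (measurableSet_singleton j)
  have hnaive (k : Fin 2) : (∫ ω in {ω | Vstar ω = k}, (Y ω : ℝ) ∂μ) / μ.real {ω | Vstar ω = k}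
      = q k 0 * Real.exp α₀ + q k 1 * Real.exp (α₀ + α₁) := by
    have h := naive_mean_eq_sum_reclassification hV hVstar (by fun_prop) hYint
      (fun j => (hposV j).ne') hnondiff hmeans k
    simp only [Fin.sum_univ_two, Fin.val_zero, Fin.val_one, Nat.cast_zero, Nat.cast_one,
      mul_zero, add_zero, mul_one] at h
    exact h
  refine ⟨hnaive, fun hα₁ hq => ?_⟩
  have hrow (k : Fin 2) : q k 0 = 1 - q k 1 := by
    have h := sum_measureReal_fiber_inter_div hVfib (hVstar (measurableSet_singleton k)) (hposVstar k).ne'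
    rw [Fin.sum_univ_two] at h
    exact eq_sub_of_add_eq h
  have hq_nonneg (k j : Fin 2) : 0 ≤ q k j := div_nonneg measureReal_nonneg measureReal_nonneg
  have hΔ : Δ = Real.log ((1 - q 1 1) * Real.exp α₀ + q 1 1 * Real.exp (α₀ + α₁)) -
      Real.log ((1 - q 0 1) * Real.exp α₀ + q 0 1 * Real.exp (α₀ + α₁)) := by
    simp only [Δ, ← measureReal_def, hnaive, hrow]
  have hq₁₁ : q 1 1 ≤ 1 := by linarith [hrow 1, hq_nonneg 1 0]
  set a := Real.exp α₀
  set b := Real.exp (α₀ + α₁)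
  have ha : 0 < a := Real.exp_pos α₀
  have hab : a < b := Real.exp_lt_exp.2 (by linarith)
  have hα₁_eq : Real.log b - Real.log a = α₁ := by simp [a, b]
  rw [hΔ, ← hα₁_eq]
  refine ⟨⟨log_mix_sub_log_mix_pos ha hab (hq_nonneg 0 1) hq,
    log_mix_sub_log_mix_le ha hab.le (hq_nonneg 0 1) (hq_nonneg 1 1) hq₁₁⟩,
    fun hmisc => log_mix_sub_log_mix_lt ha hab (hq_nonneg 0 1) (hq_nonneg 1 1) hq₁₁ ?_⟩
  by_contra! hperfect
  exact hmisc ⟨by linarith [hrow 0, hperfect.1, hq_nonneg 0 1], le_antisymm hq₁₁ hperfect.2⟩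
end
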